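/- arXiv:2409.03617 — 4 statements merged into one kernel-verified Lean document; each statement's English description precedes it below -/
import Mathlib

section
/- Let (G, ω, μ) be a weighted graph with an intrinsic pseudo metric d (i.e. (1/μ(x)) Σ_y ω(x,y) d²(x,y) ≤ 1 for all x) whose jump size s is finite. Let ρ : G → (0,∞) satisfy ρ(x) ≥ ρ₀ > 0, and let ξ(x,t) := -γt - α[d(x,x₀) - δR]₊ with α ≥ 0 and γ ≥ α²e^{2αs}/(2ρ₀). Then for all x ∈ G and t ∈ [0,T]: ρ(x) ∂_t ξ(x,t) μ(x) + (1/2) Σ_{y∈G} ω(x,y)(1 - e^{ξ(y,t)-ξ(x,t)})² ≤ 0. -/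
lemma exp_sub_one_sq_le' (a : ℝ) :
    (1 - Real.exp a) ^ 2 ≤ Real.exp (2 * |a|) * a ^ 2 := by
  have h1 : |Real.exp a - 1| ≤ |a| * Real.exp |a| := by
    rcases le_or_gt 0 a with h | h
    · rw [abs_of_nonneg h, abs_of_nonneg (sub_nonneg.2 (Real.one_le_exp h))]
      have h4 : (1 - a) * Real.exp a ≤ Real.exp (-a) * Real.exp a :=
        mul_le_mul_of_nonneg_right (by linarith [Real.add_one_le_exp (-a)])
          (Real.exp_pos a).le
      rw [← Real.exp_add, neg_add_cancel, Real.exp_zero] at h4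
      nlinarith
    · rw [abs_of_neg h, abs_of_nonpos (sub_nonpos.2 (Real.exp_le_one_iff.mpr h.le))]
      nlinarith [Real.add_one_le_exp a, Real.one_le_exp (by linarith : (0:ℝ) ≤ -a)]
  have h2 := abs_le.1 h1
  have h4 : (Real.exp a - 1) ^ 2 ≤ (|a| * Real.exp |a|) ^ 2 := sq_le_sq' h2.1 h2.2
  have h5 : (|a| * Real.exp |a|) ^ 2 = Real.exp (2 * |a|) * a ^ 2 := by
    have hsq : Real.exp |a| * Real.exp |a| = Real.exp (2 * |a|) := by
      rw [← Real.exp_add]; ring_nf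
    rw [mul_pow, sq_abs, pow_two (Real.exp |a|), hsq]; ring
  calc (1 - Real.exp a) ^ 2 = (Real.exp a - 1) ^ 2 := by ring
    _ ≤ _ := h4
    _ = _ := h5

/-- Lemma 5.2: with `ξ(x,t) = -γt - α[d(x,x₀) - δR]₊`, `α ≥ 0` and
`γ ≥ α² e^(2αs)/(2ρ₀)`, one has
`ρ(x) ∂_t ξ(x,t) μ(x) + (1/2) Σ_y ω(x,y)(1 - e^(ξ(y,t)-ξ(x,t)))² ≤ 0`. -/
theorem xi_supersolution {G : Type*} [Countable G]
    (ω : G → G → ℝ) (μ : G → ℝ) (d : G → G → ℝ)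
    (hω_nonneg : ∀ x y, 0 ≤ ω x y)
    (hω_symm : ∀ x y, ω x y = ω y x)
    (hω_loop : ∀ x, ω x x = 0)
    (hμ_pos : ∀ x, 0 < μ x)
    (hd_nonneg : ∀ x y, 0 ≤ d x y)
    (hd_refl : ∀ x, d x x = 0)
    (hd_symm : ∀ x y, d x y = d y x)
    (hd_tri : ∀ x y z, d x y ≤ d x z + d z y)
    (hd_sum : ∀ x, Summable (fun y => ω x y * (d x y) ^ 2))
    (hintrinsic : ∀ x, (1 / μ x) * ∑' y, ω x y * (d x y) ^ 2 ≤ 1)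
    (s : ℝ) (hs : 0 ≤ s)
    (hjump : ∀ x y, 0 < ω x y → d x y ≤ s)
    (ρ : G → ℝ) (ρ₀ : ℝ) (hρ₀ : 0 < ρ₀) (hρ : ∀ x, ρ₀ ≤ ρ x)
    (x₀ : G) (R δ T α γ : ℝ) (hR : 0 < R) (hδ : 0 < δ ∧ δ < 1 / 2)
    (hT : 0 < T) (hα : 0 ≤ α)
    (hγ : α ^ 2 * Real.exp (2 * α * s) / (2 * ρ₀) ≤ γ)
    (ξ : G → ℝ → ℝ)
    (hξ : ∀ x t, ξ x t = -γ * t - α * max (d x x₀ - δ * R) 0) :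
    ∀ x : G, ∀ t ∈ Set.Icc (0 : ℝ) T,
      ρ x * deriv (ξ x) t * μ x +
        (1 / 2) * ∑' y, ω x y * (1 - Real.exp (ξ y t - ξ x t)) ^ 2 ≤ 0 := by
  intro x t ht
  have hγ0 : 0 ≤ γ := le_trans (by positivity) hγ
  -- derivative
  have hderiv : deriv (ξ x) t = -γ := by
    have hfun : ξ x = fun u => -γ * u - α * max (d x x₀ - δ * R) 0 := funext (hξ x)
    rw [hfun]
    simpa using (((hasDerivAt_id t).const_mul (-γ)).sub_const
      (α * max (d x x₀ - δ * R) 0)).deriv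
  set C := α ^ 2 * Real.exp (2 * α * s) with hCdef
  have hC0 : 0 ≤ C := by positivity
  -- termwise bound
  have hterm : ∀ y, ω x y * (1 - Real.exp (ξ y t - ξ x t)) ^ 2
      ≤ C * (ω x y * d x y ^ 2) := by
    intro y
    rcases (hω_nonneg x y).eq_or_lt with h | h
    · rw [← h]; simp
    · have hds : d x y ≤ s := hjump x y h
      have hdxy : 0 ≤ d x y := hd_nonneg x y
      have hΔ : |ξ y t - ξ x t| ≤ α * d x y := by
        rw [hξ, hξ]
        have he : (-γ * t - α * max (d y x₀ - δ * R) 0)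
            - (-γ * t - α * max (d x x₀ - δ * R) 0)
            = α * (max (d x x₀ - δ * R) 0 - max (d y x₀ - δ * R) 0) := by ring
        rw [he, abs_mul, abs_of_nonneg hα]
        have hmax : |max (d x x₀ - δ * R) 0 - max (d y x₀ - δ * R) 0|
            ≤ d x y := by
          calc |max (d x x₀ - δ * R) 0 - max (d y x₀ - δ * R) 0|
              ≤ |(d x x₀ - δ * R) - (d y x₀ - δ * R)| :=
                abs_max_sub_max_le_abs _ _ _
            _ = |d x x₀ - d y x₀| := by ring_nf
            _ ≤ d x y := by
                rw [abs_sub_le_iff]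
                constructor
                · have := hd_tri x x₀ y
                  have := hd_symm y x₀
                  have := hd_symm x y
                  linarith [hd_tri x x₀ y]
                · have h1 := hd_tri y x₀ x
                  have h2 := hd_symm y x
                  linarith
        exact mul_le_mul_of_nonneg_left hmax hα
      have habs : |ξ y t - ξ x t| ≤ α * s :=
        hΔ.trans (mul_le_mul_of_nonneg_left hds hα)
      have hkey : (1 - Real.exp (ξ y t - ξ x t)) ^ 2 ≤ C * d x y ^ 2 := by
        calc (1 - Real.exp (ξ y t - ξ x t)) ^ 2
            ≤ Real.exp (2 * |ξ y t - ξ x t|) * (ξ y t - ξ x t) ^ 2 :=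
              exp_sub_one_sq_le' _
          _ ≤ Real.exp (2 * α * s) * (α * d x y) ^ 2 := by
              apply mul_le_mul
              · apply Real.exp_le_exp.2; linarith
              · rw [← sq_abs (ξ y t - ξ x t)]
                apply pow_le_pow_left₀ (abs_nonneg _) hΔ
              · positivity
              · positivity
          _ = C * d x y ^ 2 := by rw [hCdef]; ring
      calc ω x y * (1 - Real.exp (ξ y t - ξ x t)) ^ 2
          ≤ ω x y * (C * d x y ^ 2) := mul_le_mul_of_nonneg_left hkey h.le
        _ = C * (ω x y * d x y ^ 2) := by ring
  have hsummable : Summable (fun y => ω x y * (1 - Real.exp (ξ y t - ξ x t)) ^ 2) :=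
    Summable.of_nonneg_of_le (fun y => mul_nonneg (hω_nonneg x y) (sq_nonneg _)) hterm ((hd_sum x).mul_left C)
  have htsum : ∑' y, ω x y * (1 - Real.exp (ξ y t - ξ x t)) ^ 2
      ≤ C * ∑' y, ω x y * d x y ^ 2 := by
    calc ∑' y, ω x y * (1 - Real.exp (ξ y t - ξ x t)) ^ 2
        ≤ ∑' y, C * (ω x y * d x y ^ 2) :=
          Summable.tsum_le_tsum hterm hsummable ((hd_sum x).mul_left C)
      _ = C * ∑' y, ω x y * d x y ^ 2 := tsum_mul_left
  have hμ := hμ_pos x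
  have hint : ∑' y, ω x y * d x y ^ 2 ≤ μ x := by
    have h2 := mul_le_mul_of_nonneg_left (hintrinsic x) hμ.le
    rwa [mul_one, ← mul_assoc, mul_one_div, div_self hμ.ne', one_mul] at h2
  have hC2 : C ≤ 2 * ρ₀ * γ := by
    rw [div_le_iff₀ (by positivity)] at hγ
    linarith
  rw [hderiv]
  have hS : ∑' y, ω x y * (1 - Real.exp (ξ y t - ξ x t)) ^ 2 ≤ 2 * ρ₀ * γ * μ x := by
    calc _ ≤ C * ∑' y, ω x y * d x y ^ 2 := htsum
      _ ≤ C * μ x := mul_le_mul_of_nonneg_left hint hC0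
      _ ≤ 2 * ρ₀ * γ * μ x := mul_le_mul_of_nonneg_right hC2 hμ.le
  nlinarith [mul_nonneg (mul_nonneg (sub_nonneg.2 (hρ x)) hγ0) hμ.le]
end

section
/- Let (G, ω, μ) be a weighted graph with a 1-intrinsic pseudo metric d with bound C₀ (i.e. (1/μ(x)) Σ_y ω(x,y) d(x,y) ≤ C₀ for all x) and finite jump size s. Let ρ(x) ≥ ρ₀ > 0, and let ζ(x,t) := exp(-γt - α[d(x,x₀)-δR]₊) with α ≥ 0 and γ ≥ α C₀ e^{αs}/ρ₀. Then ρ(x)∂_t ζ(x,t) + Δζ(x,t) ≤ 0 for all x ∈ G, t ∈ [0,T]. -/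
private lemma exp_sub_one_le (u : ℝ) : Real.exp u - 1 ≤ u * Real.exp u := by
  have h := Real.add_one_le_exp (-u)
  have h2 : Real.exp (-u) * Real.exp u = 1 := by
    rw [← Real.exp_add]; simp
  nlinarith [Real.exp_pos u]

/-- Lemma 5.3: with `ζ(x,t) = exp(-γt - α[d(x,x₀) - δR]₊)`, a 1-intrinsic
pseudo metric with bound `C₀`, `α ≥ 0` and `γ ≥ α C₀ e^(αs)/ρ₀`, one has
`ρ(x)∂_t ζ(x,t) + Δζ(x,t) ≤ 0`. -/
theorem zeta_supersolution {G : Type*} [Countable G]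
    (ω : G → G → ℝ) (μ : G → ℝ) (d : G → G → ℝ)
    (hω_nonneg : ∀ x y, 0 ≤ ω x y)
    (hω_symm : ∀ x y, ω x y = ω y x)
    (hω_loop : ∀ x, ω x x = 0)
    (hμ_pos : ∀ x, 0 < μ x)
    (hd_nonneg : ∀ x y, 0 ≤ d x y)
    (hd_refl : ∀ x, d x x = 0)
    (hd_symm : ∀ x y, d x y = d y x)
    (hd_tri : ∀ x y z, d x y ≤ d x z + d z y)
    (C₀ : ℝ) (hC₀ : 0 < C₀)
    (hd_sum : ∀ x, Summable (fun y => ω x y * d x y))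
    (hintrinsic1 : ∀ x, (1 / μ x) * ∑' y, ω x y * d x y ≤ C₀)
    (s : ℝ) (hs : 0 ≤ s)
    (hjump : ∀ x y, 0 < ω x y → d x y ≤ s)
    (ρ : G → ℝ) (ρ₀ : ℝ) (hρ₀ : 0 < ρ₀) (hρ : ∀ x, ρ₀ ≤ ρ x)
    (x₀ : G) (R δ T α γ : ℝ) (hR : 0 < R) (hδ : 0 < δ ∧ δ < 1 / 2)
    (hT : 0 < T) (hα : 0 ≤ α)
    (hγ : α * C₀ * Real.exp (α * s) / ρ₀ ≤ γ)
    (ζ : G → ℝ → ℝ)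
    (hζ : ∀ x t, ζ x t = Real.exp (-γ * t - α * max (d x x₀ - δ * R) 0))
    (hζ_sum : ∀ x t, Summable (fun y => (ζ y t - ζ x t) * ω x y)) :
    ∀ x : G, ∀ t ∈ Set.Icc (0 : ℝ) T,
      ρ x * deriv (ζ x) t + (1 / μ x) * ∑' y, (ζ y t - ζ x t) * ω x y ≤ 0 := by
  intro x t _
  set c : ℝ := α * max (d x x₀ - δ * R) 0 with hc
  -- derivative in time
  have hζx : ζ x = fun t => Real.exp (-γ * t - c) := funext (hζ x)
  have hDA : HasDerivAt (fun t : ℝ => -γ * t - c) (-γ) t := by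
    simpa using ((hasDerivAt_id t).const_mul (-γ)).sub_const c
  have hderiv : deriv (ζ x) t = Real.exp (-γ * t - c) * (-γ) := by
    rw [hζx]; exact hDA.exp.deriv
  have hζpos : 0 < ζ x t := by rw [hζ]; exact Real.exp_pos _
  set K : ℝ := ζ x t * (α * Real.exp (α * s)) with hK
  have hKnn : 0 ≤ K := by positivity
  -- pointwise bound
  have hkey : ∀ y, (ζ y t - ζ x t) * ω x y ≤ K * (ω x y * d x y) := by
    intro y
    rcases (hω_nonneg x y).eq_or_lt with h0 | hpos
    · rw [← h0]
      have : 0 ≤ K * (ω x y * d x y) := by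
        rw [← h0]; simp
      simpa using this
    · have hds : d x y ≤ s := hjump x y hpos
      set u : ℝ := α * (max (d x x₀ - δ * R) 0 - max (d y x₀ - δ * R) 0) with hu
      have hζy : ζ y t = ζ x t * Real.exp u := by
        rw [hζ, hζ, ← Real.exp_add]
        congr 1; rw [hu]; ring
      have hF : max (d x x₀ - δ * R) 0 - max (d y x₀ - δ * R) 0 ≤ d x y := by
        have h1 : d x x₀ ≤ d x y + d y x₀ := hd_tri x x₀ y
        have h2 : (0:ℝ) ≤ max (d y x₀ - δ * R) 0 + d x y :=
          add_nonneg (le_max_right _ _) (hd_nonneg x y)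
        have h3 : d x x₀ - δ * R ≤ max (d y x₀ - δ * R) 0 + d x y := by
          have := le_max_left (d y x₀ - δ * R) 0
          linarith
        have := max_le h3 h2
        linarith
      have hud : u ≤ α * d x y := by
        rw [hu]; exact mul_le_mul_of_nonneg_left hF hα
      have hexp : Real.exp u - 1 ≤ α * Real.exp (α * s) * d x y := by
        rcases le_or_gt u 0 with hu0 | hu0
        · have : Real.exp u ≤ 1 := Real.exp_le_one_iff.mpr hu0
          have : Real.exp u - 1 ≤ 0 := by linarith
          have hrhs : 0 ≤ α * Real.exp (α * s) * d x y := mul_nonneg (by positivity) (hd_nonneg x y)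
          linarith
        · have h1 : Real.exp u - 1 ≤ u * Real.exp u := exp_sub_one_le u
          have huαs : u ≤ α * s :=
            le_trans hud (mul_le_mul_of_nonneg_left hds hα)
          have h2 : Real.exp u ≤ Real.exp (α * s) := Real.exp_le_exp.mpr huαs
          have h3 : u * Real.exp u ≤ (α * d x y) * Real.exp (α * s) := by
            apply mul_le_mul hud h2 (Real.exp_pos u).le
            exact mul_nonneg hα (hd_nonneg x y)
          nlinarith
      have hζdiff : ζ y t - ζ x t ≤ ζ x t * (α * Real.exp (α * s)) * d x y := by
        rw [hζy]
        have := mul_le_mul_of_nonneg_left hexp hζpos.le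
        nlinarith
      calc (ζ y t - ζ x t) * ω x y
          ≤ (ζ x t * (α * Real.exp (α * s)) * d x y) * ω x y :=
            mul_le_mul_of_nonneg_right hζdiff (hω_nonneg x y)
        _ = K * (ω x y * d x y) := by rw [hK]; ring
  -- sum the bound
  have hsum2 : Summable (fun y => K * (ω x y * d x y)) := (hd_sum x).mul_left K
  have hS : (∑' y, (ζ y t - ζ x t) * ω x y) ≤ K * ∑' y, ω x y * d x y := by
    rw [← tsum_mul_left]
    exact Summable.tsum_le_tsum hkey (hζ_sum x t) hsum2
  have hμx : 0 < μ x := hμ_pos x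
  have hΔ : (1 / μ x) * ∑' y, (ζ y t - ζ x t) * ω x y ≤ K * C₀ := by
    have h1 : (1 / μ x) * ∑' y, (ζ y t - ζ x t) * ω x y
        ≤ (1 / μ x) * (K * ∑' y, ω x y * d x y) :=
      mul_le_mul_of_nonneg_left hS (by positivity)
    have h2 : (1 / μ x) * (K * ∑' y, ω x y * d x y)
        = K * ((1 / μ x) * ∑' y, ω x y * d x y) := by ring
    have h3 : K * ((1 / μ x) * ∑' y, ω x y * d x y) ≤ K * C₀ :=
      mul_le_mul_of_nonneg_left (hintrinsic1 x) hKnn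
    linarith [h1, h2 ▸ h1]
  -- conclude
  have hγ0 : 0 ≤ γ := le_trans (by positivity) hγ
  have hγρ₀ : α * C₀ * Real.exp (α * s) ≤ γ * ρ₀ := (div_le_iff₀ hρ₀).mp hγ
  have hγρ : γ * ρ₀ ≤ γ * ρ x := mul_le_mul_of_nonneg_left (hρ x) hγ0
  have hζxt : ζ x t = Real.exp (-γ * t - c) := hζ x t
  rw [hderiv, ← hζxt]
  have : ρ x * (ζ x t * -γ) + K * C₀ ≤ 0 := by
    rw [hK]
    nlinarith [hζpos, hγρ₀, hγρ]
  linarith [hΔ]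
end

section
/- Under the hypotheses of the previous cut-off lemma and additionally assuming d is intrinsic ((1/μ(x)) Σ_y ω(x,y)d²(x,y) ≤ 1), one has for all x ∈ G: Σ_{y∈G} (η(y) - η(x))² ω(x,y) ≤ (1/(δ²R²)) μ(x) 𝟙{(1-δ)R - 2s ≤ d(x,x₀) ≤ R}. -/
/-- Gradient-squared bound for the cut-off `η(x) = min{[R - s - d(x,x₀)]₊/(δR), 1}`
when the pseudo metric `d` is intrinsic:
`Σ_y (η(y)-η(x))² ω(x,y) ≤ (1/(δ²R²)) μ(x) 𝟙_{(1-δ)R - 2s ≤ d(x,x₀) ≤ R}`. -/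
theorem cutoff_gradient_sq_bound {G : Type*} [Countable G]
    (ω : G → G → ℝ) (μ : G → ℝ) (d : G → G → ℝ)
    (hω_nonneg : ∀ x y, 0 ≤ ω x y)
    (hω_symm : ∀ x y, ω x y = ω y x)
    (hω_loop : ∀ x, ω x x = 0)
    (hμ_pos : ∀ x, 0 < μ x)
    (hd_nonneg : ∀ x y, 0 ≤ d x y)
    (hd_refl : ∀ x, d x x = 0)
    (hd_symm : ∀ x y, d x y = d y x)
    (hd_tri : ∀ x y z, d x y ≤ d x z + d z y)
    (hd_sum : ∀ x, Summable (fun y => ω x y * (d x y) ^ 2))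
    (hintrinsic : ∀ x, (1 / μ x) * ∑' y, ω x y * (d x y) ^ 2 ≤ 1)
    (s : ℝ) (hs : 0 ≤ s)
    (hjump : ∀ x y, 0 < ω x y → d x y ≤ s)
    (x₀ : G) (R δ : ℝ) (hR : 0 < R) (hδ : 0 < δ ∧ δ < 1 / 2)
    (η : G → ℝ)
    (hη : ∀ x, η x = min (max (R - s - d x x₀) 0 / (δ * R)) 1) :
    ∀ x : G,
      ∑' y, (η y - η x) ^ 2 * ω x y ≤ (1 / (δ ^ 2 * R ^ 2)) * μ x *
        (if (1 - δ) * R - 2 * s ≤ d x x₀ ∧ d x x₀ ≤ R then 1 else 0) := by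
  intro x
  obtain ⟨hδ0, hδhalf⟩ := hδ
  have hδR : 0 < δ * R := mul_pos hδ0 hR
  -- η vanishes far out and equals 1 near the center
  have hη0 : ∀ z : G, R - s ≤ d z x₀ → η z = 0 := by
    intro z hz
    rw [hη]
    have : max (R - s - d z x₀) 0 = 0 := max_eq_right (by linarith)
    rw [this, zero_div]
    exact min_eq_left (by norm_num)
  have hη1 : ∀ z : G, d z x₀ ≤ R - s - δ * R → η z = 1 := by
    intro z hz
    rw [hη]
    have h1 : max (R - s - d z x₀) 0 = R - s - d z x₀ := max_eq_left (by nlinarith)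
    rw [h1]
    refine min_eq_right ?_
    rw [le_div_iff₀ hδR]
    linarith
  -- Lipschitz bound
  have key : ∀ y, (η y - η x) ^ 2 * ω x y ≤
      (1 / (δ ^ 2 * R ^ 2)) * (ω x y * d x y ^ 2) := by
    intro y
    have habs : |η y - η x| ≤ d x y / (δ * R) := by
      rw [hη, hη]
      have h1 : |min (max (R - s - d y x₀) 0 / (δ * R)) 1 -
          min (max (R - s - d x x₀) 0 / (δ * R)) 1| ≤
          max |max (R - s - d y x₀) 0 / (δ * R) - max (R - s - d x x₀) 0 / (δ * R)| |(1:ℝ) - 1| :=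
        abs_min_sub_min_le_max _ _ _ _
      have h2 : |max (R - s - d y x₀) 0 / (δ * R) - max (R - s - d x x₀) 0 / (δ * R)| ≤
          d x y / (δ * R) := by
        rw [div_sub_div_same, abs_div, abs_of_pos hδR, div_le_div_iff_of_pos_right hδR]
        have h3 : |max (R - s - d y x₀) 0 - max (R - s - d x x₀) 0| ≤
            max |(R - s - d y x₀) - (R - s - d x x₀)| |(0:ℝ) - 0| :=
          abs_max_sub_max_le_max _ _ _ _
        have h4 : |(R - s - d y x₀) - (R - s - d x x₀)| ≤ d x y := by
          rw [abs_le]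
          constructor
          · have := hd_tri y x₀ x
            rw [hd_symm y x] at this
            linarith
          · have := hd_tri x x₀ y
            linarith
        calc |max (R - s - d y x₀) 0 - max (R - s - d x x₀) 0|
            ≤ max |(R - s - d y x₀) - (R - s - d x x₀)| |(0:ℝ) - 0| := h3
          _ ≤ d x y := by
              rw [sub_zero, abs_zero]
              exact max_le h4 (hd_nonneg x y)
      calc |min (max (R - s - d y x₀) 0 / (δ * R)) 1 - min (max (R - s - d x x₀) 0 / (δ * R)) 1|
          ≤ max |max (R - s - d y x₀) 0 / (δ * R) - max (R - s - d x x₀) 0 / (δ * R)| |(1:ℝ) - 1| := h1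
        _ ≤ d x y / (δ * R) := by
            rw [sub_self, abs_zero]
            exact max_le h2 (div_nonneg (hd_nonneg x y) hδR.le)
    have hsq : (η y - η x) ^ 2 ≤ (d x y / (δ * R)) ^ 2 := by
      rw [← sq_abs (η y - η x)]
      exact pow_le_pow_left₀ (abs_nonneg _) habs 2
    have : (d x y / (δ * R)) ^ 2 = (1 / (δ ^ 2 * R ^ 2)) * d x y ^ 2 := by
      rw [div_pow, mul_pow]; ring
    rw [this] at hsq
    calc (η y - η x) ^ 2 * ω x y ≤ ((1 / (δ ^ 2 * R ^ 2)) * d x y ^ 2) * ω x y :=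
          mul_le_mul_of_nonneg_right hsq (hω_nonneg x y)
      _ = (1 / (δ ^ 2 * R ^ 2)) * (ω x y * d x y ^ 2) := by ring
  have hsumR : Summable (fun y => (1 / (δ ^ 2 * R ^ 2)) * (ω x y * d x y ^ 2)) :=
    (hd_sum x).mul_left _
  have hsumL : Summable (fun y => (η y - η x) ^ 2 * ω x y) :=
    Summable.of_nonneg_of_le (fun y => mul_nonneg (sq_nonneg _) (hω_nonneg x y)) key hsumR
  by_cases hcond : (1 - δ) * R - 2 * s ≤ d x x₀ ∧ d x x₀ ≤ R
  · rw [if_pos hcond, mul_one]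
    have hS : ∑' y, ω x y * d x y ^ 2 ≤ μ x := by
      have h := hintrinsic x
      rw [one_div, inv_mul_le_iff₀ (hμ_pos x)] at h
      simpa using h
    calc ∑' y, (η y - η x) ^ 2 * ω x y
        ≤ ∑' y, (1 / (δ ^ 2 * R ^ 2)) * (ω x y * d x y ^ 2) :=
          Summable.tsum_le_tsum key hsumL hsumR
      _ = (1 / (δ ^ 2 * R ^ 2)) * ∑' y, ω x y * d x y ^ 2 := tsum_mul_left
      _ ≤ (1 / (δ ^ 2 * R ^ 2)) * μ x := by
          refine mul_le_mul_of_nonneg_left hS ?_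
          positivity
  · rw [if_neg hcond, mul_zero]
    have hzero : ∀ y, (η y - η x) ^ 2 * ω x y = 0 := by
      intro y
      rcases eq_or_lt_of_le (hω_nonneg x y) with h | h
      · rw [← h, mul_zero]
      have hdy : d x y ≤ s := hjump x y h
      push_neg at hcond
      rcases lt_or_ge (d x x₀) ((1 - δ) * R - 2 * s) with hc | hc
      · -- both η equal 1
        have hx1 : η x = 1 := hη1 x (by nlinarith)
        have hy1 : η y = 1 := by
          refine hη1 y ?_
          have := hd_tri y x₀ x
          rw [hd_symm y x] at this
          nlinarith
        rw [hx1, hy1, sub_self]; ring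
      · -- d x x₀ > R : both η equal 0
        have hcR : R < d x x₀ := hcond hc
        have hx0 : η x = 0 := hη0 x (by linarith)
        have hy0 : η y = 0 := by
          refine hη0 y ?_
          have := hd_tri x x₀ y
          linarith
        rw [hx0, hy0, sub_self]; ring
    have h0 : (fun y => (η y - η x) ^ 2 * ω x y) = fun _ => (0 : ℝ) := funext hzero
    rw [h0, tsum_zero]
end

section
/- Let η(x) := min{[R - s - d(x,x₀)]₊/(δR), 1} and assume d is 1-intrinsic with bound C₀ ((1/μ(x)) Σ_y ω(x,y)d(x,y) ≤ C₀). Then |Δη(x)| ≤ (C₀/(δR)) 𝟙{(1-δ)R - 2s ≤ d(x,x₀) ≤ R} for all x ∈ G. -/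
lemma cutoff_lip (c : ℝ) (hc : 0 < c) (a b : ℝ) :
    |min (max a 0 / c) 1 - min (max b 0 / c) 1| ≤ |a - b| / c := by
  have h1 : |min (max a 0 / c) 1 - min (max b 0 / c) 1| ≤
      max |max a 0 / c - max b 0 / c| |(1 : ℝ) - 1| := abs_min_sub_min_le_max _ _ _ _
  have h2 : |max a 0 / c - max b 0 / c| = |max a 0 - max b 0| / c := by
    rw [div_sub_div_same, abs_div, abs_of_pos hc]
  have h3 : |max a 0 - max b 0| ≤ max |a - b| |(0:ℝ) - 0| := abs_max_sub_max_le_max _ _ _ _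
  have h4 : |max a 0 - max b 0| ≤ |a - b| := by simpa using h3
  calc |min (max a 0 / c) 1 - min (max b 0 / c) 1|
      ≤ max |max a 0 / c - max b 0 / c| |(1:ℝ) - 1| := h1
    _ = |max a 0 / c - max b 0 / c| := by simp
    _ = |max a 0 - max b 0| / c := h2
    _ ≤ |a - b| / c := by gcongr

set_option maxHeartbeats 1000000 in
/-- Laplacian bound for the cut-off `η(x) = min{[R - s - d(x,x₀)]₊/(δR), 1}`
when `d` is 1-intrinsic with bound `C₀`:
`|Δη(x)| ≤ (C₀/(δR)) 𝟙_{(1-δ)R - 2s ≤ d(x,x₀) ≤ R}`. -/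
theorem cutoff_laplacian_bound {G : Type*} [Countable G]
    (ω : G → G → ℝ) (μ : G → ℝ) (d : G → G → ℝ)
    (hω_nonneg : ∀ x y, 0 ≤ ω x y)
    (hω_symm : ∀ x y, ω x y = ω y x)
    (hω_loop : ∀ x, ω x x = 0)
    (hμ_pos : ∀ x, 0 < μ x)
    (hd_nonneg : ∀ x y, 0 ≤ d x y)
    (hd_refl : ∀ x, d x x = 0)
    (hd_symm : ∀ x y, d x y = d y x)
    (hd_tri : ∀ x y z, d x y ≤ d x z + d z y)
    (C₀ : ℝ) (hC₀ : 0 < C₀)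
    (hd_sum : ∀ x, Summable (fun y => ω x y * d x y))
    (hintrinsic1 : ∀ x, (1 / μ x) * ∑' y, ω x y * d x y ≤ C₀)
    (s : ℝ) (hs : 0 ≤ s)
    (hjump : ∀ x y, 0 < ω x y → d x y ≤ s)
    (x₀ : G) (R δ : ℝ) (hR : 0 < R) (hδ : 0 < δ ∧ δ < 1 / 2)
    (η : G → ℝ)
    (hη : ∀ x, η x = min (max (R - s - d x x₀) 0 / (δ * R)) 1)
    (hη_sum : ∀ x, Summable (fun y => (η y - η x) * ω x y)) :
    ∀ x : G,
      |(1 / μ x) * ∑' y, (η y - η x) * ω x y| ≤ (C₀ / (δ * R)) *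
        (if (1 - δ) * R - 2 * s ≤ d x x₀ ∧ d x x₀ ≤ R then 1 else 0) := by
  obtain ⟨hδ0, hδ2⟩ := hδ
  have hδR : 0 < δ * R := mul_pos hδ0 hR
  intro x
  by_cases hcond : (1 - δ) * R - 2 * s ≤ d x x₀ ∧ d x x₀ ≤ R
  · -- annulus case: Lipschitz bound
    rw [if_pos hcond, mul_one]
    have key : ∀ y, |(η y - η x) * ω x y| ≤ ω x y * d x y / (δ * R) := by
      intro y
      have hlip : |η y - η x| ≤ |d y x₀ - d x x₀| / (δ * R) := by
        rw [hη y, hη x]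
        have := cutoff_lip (δ * R) hδR (R - s - d y x₀) (R - s - d x x₀)
        have heq : (R - s - d y x₀) - (R - s - d x x₀) = -(d y x₀ - d x x₀) := by ring
        rwa [heq, abs_neg] at this
      have htri : |d y x₀ - d x x₀| ≤ d x y := by
        rw [abs_sub_le_iff]
        constructor
        · have := hd_tri y x₀ x
          rw [hd_symm y x] at this; linarith
        · have := hd_tri x x₀ y
          linarith
      rw [abs_mul, abs_of_nonneg (hω_nonneg x y)]
      calc |η y - η x| * ω x y ≤ (d x y / (δ * R)) * ω x y := by
            apply mul_le_mul_of_nonneg_right _ (hω_nonneg x y)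
            exact hlip.trans (by gcongr)
        _ = ω x y * d x y / (δ * R) := by ring
    have hsum_abs : Summable (fun y => |(η y - η x) * ω x y|) := (hη_sum x).abs
    have hsum_g : Summable (fun y => ω x y * d x y / (δ * R)) := (hd_sum x).div_const _
    have h1 : |∑' y, (η y - η x) * ω x y| ≤ ∑' y, |(η y - η x) * ω x y| := by
      have := norm_tsum_le_tsum_norm (f := fun y => (η y - η x) * ω x y)
        (by simp only [Real.norm_eq_abs]; exact hsum_abs)
      simp only [Real.norm_eq_abs] at this
      exact this
    have h2 : ∑' y, |(η y - η x) * ω x y| ≤ ∑' y, ω x y * d x y / (δ * R) :=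
      Summable.tsum_le_tsum key hsum_abs hsum_g
    have h3 : ∑' y, ω x y * d x y / (δ * R) = (∑' y, ω x y * d x y) / (δ * R) :=
      tsum_div_const
    have hμ : 0 < μ x := hμ_pos x
    rw [abs_mul, abs_of_nonneg (by positivity : (0:ℝ) ≤ 1 / μ x)]
    calc (1 / μ x) * |∑' y, (η y - η x) * ω x y|
        ≤ (1 / μ x) * ((∑' y, ω x y * d x y) / (δ * R)) := by
          apply mul_le_mul_of_nonneg_left _ (by positivity)
          rw [← h3]; exact h1.trans h2
      _ = ((1 / μ x) * ∑' y, ω x y * d x y) / (δ * R) := by ring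
      _ ≤ C₀ / (δ * R) := by gcongr; exact hintrinsic1 x
  · -- outside: all terms vanish
    rw [if_neg hcond, mul_zero]
    have hzero : (fun y => (η y - η x) * ω x y) = fun _ => (0:ℝ) := by
      funext y
      rcases le_or_gt (ω x y) 0 with h | h
      · have : ω x y = 0 := le_antisymm h (hω_nonneg x y)
        simp [this]
      · have hdyx : d x y ≤ s := hjump x y h
        rcases not_and_or.mp hcond with hlt | hgt
        · push_neg at hlt
          -- d x x₀ < (1-δ)R - 2s : both η's equal 1
          have hx1 : η x = 1 := by
            rw [hη x]
            apply min_eq_right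
            rw [le_div_iff₀ hδR]
            have : δ * R ≤ R - s - d x x₀ := by nlinarith
            simpa using this.trans (le_max_left _ _)
          have hy1 : η y = 1 := by
            rw [hη y]
            apply min_eq_right
            rw [le_div_iff₀ hδR]
            have hdy : d y x₀ ≤ d x x₀ + s := by
              have := hd_tri y x₀ x
              rw [hd_symm y x] at this
              linarith
            have : δ * R ≤ R - s - d y x₀ := by nlinarith
            simpa using this.trans (le_max_left _ _)
          simp [hx1, hy1]
        · push_neg at hgt
          -- d x x₀ > R : both η's equal 0
          have hx0 : η x = 0 := by
            rw [hη x]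
            have : max (R - s - d x x₀) 0 = 0 := max_eq_right (by linarith)
            simp [this, le_of_lt hδR]
          have hy0 : η y = 0 := by
            rw [hη y]
            have hdy : d x x₀ - s ≤ d y x₀ := by
              have := hd_tri x x₀ y
              linarith
            have : max (R - s - d y x₀) 0 = 0 := max_eq_right (by linarith)
            simp [this, le_of_lt hδR]
          simp [hx0, hy0]
    rw [hzero]
    simp
end
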